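/- In the distorted space-time geometry G_d with d > 0, adjacent links of a free-particle world tube that are parallel in G_d are not parallel in the Minkowski geometry (the world line wobbles): let σ_M be the Minkowski world function on ℝ⁴ and σ_d the distorted world function with parameters d > 0, σ₀ > 0; let P₋₁, P₀, P₁ ∈ ℝ⁴ satisfy σ_M(P₋₁,P₀) > σ₀, σ_M(P₀,P₁) > σ₀, σ_M(P₋₁,P₁) > σ₀; let both links have equal σ_d-length μ_d: 2σ_d(P₋₁,P₀) = 2σ_d(P₀,P₁) = μ_d², with μ_d² > 2d; and let the links be parallel in G_d, i.e., (P₋₁P₀.P₀P₁)_d = μ_d², where (P₋₁P₀.P₀P₁)_σ := σ(P₋₁,P₁) − σ(P₋₁,P₀) − σ(P₀,P₁). Then (P₋₁P₀.P₀P₁)_M > |P₋₁P₀|_M · |P₀P₁|_M = μ_d² − 2d, i.e., the Minkowski angle θ_dM between the adjacent links satisfies cosh θ_dM > 1, so the links are not parallel in the Minkowski sense. -/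
import Mathlib


/-- The Minkowski world function on ℝ⁴. -/
noncomputable def sigmaM (x y : Fin 4 → ℝ) : ℝ :=
  (1 / 2) * ((x 0 - y 0) ^ 2 - (x 1 - y 1) ^ 2 - (x 2 - y 2) ^ 2 - (x 3 - y 3) ^ 2)

/-- The distortion function D with parameters d, σ₀. -/
noncomputable def distortion (d σ₀ : ℝ) (s : ℝ) : ℝ :=
  if σ₀ < s then d else if 0 ≤ s then (d / σ₀) * s else 0

/-- The distorted world function σ_d = σ_M + D(σ_M). -/
noncomputable def sigmaD (d σ₀ : ℝ) (x y : Fin 4 → ℝ) : ℝ :=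
  sigmaM x y + distortion d σ₀ (sigmaM x y)

/-- The scalar product of the adjacent links P₋₁P₀ and P₀P₁ for a world function σ:
(P₋₁P₀.P₀P₁)_σ = σ(P₋₁,P₁) − σ(P₋₁,P₀) − σ(P₀,P₁). -/
noncomputable def linkScalarProduct (σ : (Fin 4 → ℝ) → (Fin 4 → ℝ) → ℝ)
    (Pm P₀ P₁ : Fin 4 → ℝ) : ℝ :=
  σ Pm P₁ - σ Pm P₀ - σ P₀ P₁

/-- In the distorted geometry G_d (d > 0), adjacent links of equal σ_d-length μ_d that
are parallel in G_d are not parallel in the Minkowski geometry: their Minkowski scalar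
product strictly exceeds the product of their Minkowski lengths, which equals
μ_d² − 2d (so cosh θ_dM > 1 and the world line wobbles). -/
theorem distorted_parallel_links_wobble_in_minkowski (d σ₀ : ℝ)
    (hd : 0 < d) (hσ₀ : 0 < σ₀) (Pm P₀ P₁ : Fin 4 → ℝ) (μd : ℝ)
    (h₁ : σ₀ < sigmaM Pm P₀) (h₂ : σ₀ < sigmaM P₀ P₁) (h₃ : σ₀ < sigmaM Pm P₁)
    (hlen₁ : 2 * sigmaD d σ₀ Pm P₀ = μd ^ 2)
    (hlen₂ : 2 * sigmaD d σ₀ P₀ P₁ = μd ^ 2)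
    (hμ : 2 * d < μd ^ 2)
    (hparallel : linkScalarProduct (sigmaD d σ₀) Pm P₀ P₁ = μd ^ 2) :
    linkScalarProduct sigmaM Pm P₀ P₁ >
        Real.sqrt (2 * sigmaM Pm P₀) * Real.sqrt (2 * sigmaM P₀ P₁) ∧
      Real.sqrt (2 * sigmaM Pm P₀) * Real.sqrt (2 * sigmaM P₀ P₁) = μd ^ 2 - 2 * d := by
  have hD : ∀ x y : Fin 4 → ℝ, σ₀ < sigmaM x y → sigmaD d σ₀ x y = sigmaM x y + d := by
    intro x y h
    simp [sigmaD, distortion, if_pos h]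
  have e1 := hD Pm P₀ h₁
  have e2 := hD P₀ P₁ h₂
  have e3 := hD Pm P₁ h₃
  have hm1 : 2 * sigmaM Pm P₀ = μd ^ 2 - 2 * d := by rw [e1] at hlen₁; linarith
  have hm2 : 2 * sigmaM P₀ P₁ = μd ^ 2 - 2 * d := by rw [e2] at hlen₂; linarith
  have hnn : (0:ℝ) ≤ μd ^ 2 - 2 * d := by linarith
  have hsq : Real.sqrt (2 * sigmaM Pm P₀) * Real.sqrt (2 * sigmaM P₀ P₁) = μd ^ 2 - 2 * d := by
    rw [hm1, hm2, Real.mul_self_sqrt hnn]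
  refine ⟨?_, hsq⟩
  rw [hsq]
  unfold linkScalarProduct at hparallel ⊢
  rw [e1, e2, e3] at hparallel
  linarith
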